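/- arXiv:0805.4634 — 3 statements merged into one kernel-verified Lean document; each statement's English description precedes it below -/
import Mathlib

section
/- Let (L, F) be a filtered cochain complex of abelian groups with finite decreasing filtration by subcomplexes, and let Dec(F) be the shifted filtration, Dec(F)^p L^l = { x ∈ F^{p+l} L^l : dx ∈ F^{p+l+1}L^{l+1} }. Consider the bifiltered complex (L, F, Dec(F)) and for integers a, b the iterated graded piece Gr^a_F Gr^b_{Dec(F)} L (the quotient of F^a L ∩ Dec(F)^b L by F^{a+1}L ∩ Dec(F)^b L + F^a L ∩ Dec(F)^{b+1} L, with induced differential). Then H^r(Gr^a_F Gr^b_{Dec(F)} L) = 0 for all r ≠ a − b. -/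
set_option linter.unusedVariables false


/-! Basic theory of cochain complexes of abelian groups, indexed by `ℤ`,
with subcomplexes, quotient complexes, cohomology and induced maps. -/

/-- A cochain complex of abelian groups indexed by `ℤ`. -/
structure Cochain : Type 1 where
  X : ℤ → Type
  inst : ∀ l, AddCommGroup (X l)
  d : ∀ l, X l →+ X (l + 1)
  dd : ∀ l (x : X l), d (l + 1) (d l x) = 0

attribute [instance] Cochain.inst

namespace Cochain

variable (L M : Cochain)

/-- Transport along an equality of degrees. -/
def castAdd {a b : ℤ} (h : a = b) : L.X a ≃+ L.X b := by
  subst h; exact AddEquiv.refl _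

@[simp] theorem castAdd_rfl {a : ℤ} (x : L.X a) : L.castAdd rfl x = x := rfl

/-- Cocycles in degree `l`. -/
def cocycles (l : ℤ) : AddSubgroup (L.X l) := (L.d l).ker

/-- Coboundaries in degree `l`. -/
def bdry (l : ℤ) : AddSubgroup (L.X l) :=
  ((L.castAdd (show l - 1 + 1 = l by ring)).toAddMonoidHom.comp (L.d (l - 1))).range

/-- Cohomology in degree `l`: cocycles modulo coboundaries. -/
abbrev H (l : ℤ) : Type := ↥(L.cocycles l) ⧸ (L.bdry l).addSubgroupOf (L.cocycles l)

/-- The projection from cocycles onto cohomology. -/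
abbrev Hmk (l : ℤ) : ↥(L.cocycles l) →+ L.H l := QuotientAddGroup.mk' _

/-- A morphism of cochain complexes. -/
structure Hom (L M : Cochain) where
  f : ∀ l, L.X l →+ M.X l
  comm : ∀ l (x : L.X l), f (l + 1) (L.d l x) = M.d l (f l x)

variable {L M}

theorem Hom.cast_natural (φ : Hom L M) {a b : ℤ} (h : a = b) (x : L.X a) :
    φ.f b (L.castAdd h x) = M.castAdd h (φ.f a x) := by subst h; rfl

theorem mem_bdry_map (φ : Hom L M) (l : ℤ) {x : L.X l} (hx : x ∈ L.bdry l) :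
    φ.f l x ∈ M.bdry l := by
  obtain ⟨y, hy⟩ := hx
  refine ⟨φ.f (l - 1) y, ?_⟩
  simp only [AddMonoidHom.comp_apply, AddEquiv.coe_toAddMonoidHom] at hy ⊢
  rw [← hy, φ.cast_natural, φ.comm]

/-- The map induced on cocycles by a morphism of complexes. -/
def Hom.cocyclesMap (φ : Hom L M) (l : ℤ) : ↥(L.cocycles l) →+ ↥(M.cocycles l) :=
  AddMonoidHom.codRestrict ((φ.f l).domRestrict (L.cocycles l)) (M.cocycles l) (fun x => by
    have hx : L.d l x.1 = 0 := x.2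
    show M.d l (φ.f l x.1) = 0
    rw [← φ.comm l x.1, hx, map_zero])

/-- The map induced on cohomology by a morphism of complexes. -/
def Hom.Hmap (φ : Hom L M) (l : ℤ) : L.H l →+ M.H l :=
  QuotientAddGroup.lift _ ((M.Hmk l).comp (φ.cocyclesMap l)) (fun x hx => by
    have hx' : (x : L.X l) ∈ L.bdry l := AddSubgroup.mem_addSubgroupOf.mp hx
    have : (φ.cocyclesMap l x : M.X l) ∈ M.bdry l := mem_bdry_map φ l hx'
    simpa using (QuotientAddGroup.eq_zero_iff _).2 (AddSubgroup.mem_addSubgroupOf.mpr this))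

variable (L)

/-- A family of subgroups is a subcomplex if it is stable under the differential. -/
def IsSubcomplex (S : ∀ l, AddSubgroup (L.X l)) : Prop :=
  ∀ l, ∀ x ∈ S l, L.d l x ∈ S (l + 1)

/-- The subcomplex determined by a `d`-stable family of subgroups. -/
def sub (S : ∀ l, AddSubgroup (L.X l)) (hS : L.IsSubcomplex S) : Cochain where
  X l := S l
  inst l := inferInstance
  d l := AddMonoidHom.codRestrict ((L.d l).domRestrict (S l)) (S (l + 1))
    (fun x => hS l x.1 x.2)
  dd l x := Subtype.ext (L.dd l x.1)

/-- The inclusion of a subcomplex. -/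
def subIncl (S : ∀ l, AddSubgroup (L.X l)) (hS : L.IsSubcomplex S) :
    Hom (L.sub S hS) L where
  f l := (S l).subtype
  comm _ _ := rfl

/-- The quotient complex by a subcomplex. -/
def quot (S : ∀ l, AddSubgroup (L.X l)) (hS : L.IsSubcomplex S) : Cochain where
  X l := L.X l ⧸ S l
  inst l := inferInstance
  d l := QuotientAddGroup.lift (S l) ((QuotientAddGroup.mk' (S (l + 1))).comp (L.d l))
    (fun x hx => by simpa using (QuotientAddGroup.eq_zero_iff _).2 (hS l x hx))
  dd l x := QuotientAddGroup.induction_on x (fun y => by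
    simp only [QuotientAddGroup.lift_mk, AddMonoidHom.comp_apply,
      QuotientAddGroup.mk'_apply, QuotientAddGroup.lift_mk, L.dd]
    rfl)

/-- The projection onto a quotient complex. -/
def quotHom (S : ∀ l, AddSubgroup (L.X l)) (hS : L.IsSubcomplex S) :
    Hom L (L.quot S hS) where
  f l := QuotientAddGroup.mk' (S l)
  comm l x := by
    simp only [quot, QuotientAddGroup.mk'_apply, QuotientAddGroup.lift_mk,
      AddMonoidHom.comp_apply]
    rfl

/-- The filtration induced on cohomology by a subcomplex: the image of
`H^l(S) → H^l(L)`. -/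
def imageInH (S : ∀ l, AddSubgroup (L.X l)) (hS : L.IsSubcomplex S) (l : ℤ) :
    AddSubgroup (L.H l) :=
  ((L.subIncl S hS).Hmap l).range

variable {L}

/-- Restriction of a morphism of complexes to subcomplexes. -/
def Hom.restrictHom (φ : Hom L M) (S : ∀ l, AddSubgroup (L.X l))
    (T : ∀ l, AddSubgroup (M.X l)) (hS : L.IsSubcomplex S) (hT : M.IsSubcomplex T)
    (h : ∀ l, ∀ x ∈ S l, φ.f l x ∈ T l) :
    Hom (L.sub S hS) (M.sub T hT) where
  f l := AddMonoidHom.codRestrict ((φ.f l).domRestrict (S l)) (T l) (fun x => h l x.1 x.2)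
  comm l x := Subtype.ext (φ.comm l x.1)

/-- Descent of a morphism of complexes to quotient complexes. -/
def Hom.descendHom (φ : Hom L M) (S : ∀ l, AddSubgroup (L.X l))
    (T : ∀ l, AddSubgroup (M.X l)) (hS : L.IsSubcomplex S) (hT : M.IsSubcomplex T)
    (h : ∀ l, ∀ x ∈ S l, φ.f l x ∈ T l) :
    Hom (L.quot S hS) (M.quot T hT) where
  f l := QuotientAddGroup.map (S l) (T l) (φ.f l) (fun x hx => h l x hx)
  comm l x := QuotientAddGroup.induction_on x (fun y => by
    simp only [quot, QuotientAddGroup.lift_mk, QuotientAddGroup.map_mk,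
      QuotientAddGroup.mk'_apply, AddMonoidHom.comp_apply, φ.comm]
    exact congrArg (QuotientAddGroup.mk' (T (l + 1))) (φ.comm l y))

end Cochain
namespace Cochain

variable (L M : Cochain)

theorem IsSubcomplex.inf {L : Cochain} {S T : ∀ l, AddSubgroup (L.X l)}
    (hS : L.IsSubcomplex S) (hT : L.IsSubcomplex T) :
    L.IsSubcomplex (fun l => S l ⊓ T l) := fun l x hx =>
  AddSubgroup.mem_inf.2 ⟨hS l x (AddSubgroup.mem_inf.1 hx).1, hT l x (AddSubgroup.mem_inf.1 hx).2⟩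

theorem IsSubcomplex.sup {L : Cochain} {S T : ∀ l, AddSubgroup (L.X l)}
    (hS : L.IsSubcomplex S) (hT : L.IsSubcomplex T) :
    L.IsSubcomplex (fun l => S l ⊔ T l) := by
  intro l x hx
  rw [AddSubgroup.mem_sup] at hx ⊢
  obtain ⟨y, hy, z, hz, rfl⟩ := hx
  exact ⟨L.d l y, hS l y hy, L.d l z, hT l z hz, (map_add _ _ _).symm⟩

theorem ker_isSubcomplex {L M : Cochain} (φ : Hom L M) :
    L.IsSubcomplex (fun l => (φ.f l).ker) := by
  intro l x hx
  rw [AddMonoidHom.mem_ker] at hx ⊢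
  rw [φ.comm l x, hx, map_zero]

/-- The graded piece `S/T` of two nested subcomplexes, as a cochain complex. -/
def GrCochain (L : Cochain) (S T : ∀ l, AddSubgroup (L.X l)) (hS : L.IsSubcomplex S)
    (hT : L.IsSubcomplex T) (_hle : ∀ l, T l ≤ S l) : Cochain :=
  (L.sub S hS).quot (fun l => (T l).addSubgroupOf (S l)) (fun l x hx =>
    AddSubgroup.mem_addSubgroupOf.2 (hT l x.1 (AddSubgroup.mem_addSubgroupOf.1 hx)))

/-- The morphism induced on graded pieces by a filtered morphism of complexes. -/
def Hom.grHom {L M : Cochain} (φ : Hom L M) (S T : ∀ l, AddSubgroup (L.X l))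
    (S' T' : ∀ l, AddSubgroup (M.X l)) (hS : L.IsSubcomplex S) (hT : L.IsSubcomplex T)
    (hS' : M.IsSubcomplex S') (hT' : M.IsSubcomplex T')
    (hle : ∀ l, T l ≤ S l) (hle' : ∀ l, T' l ≤ S' l)
    (h1 : ∀ l, ∀ x ∈ S l, φ.f l x ∈ S' l) (h2 : ∀ l, ∀ x ∈ T l, φ.f l x ∈ T' l) :
    Hom (GrCochain L S T hS hT hle) (GrCochain M S' T' hS' hT' hle') :=
  (φ.restrictHom S S' hS hS' h1).descendHom _ _ _ _
    (fun l x hx => AddSubgroup.mem_addSubgroupOf.2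
      (h2 l x.1 (AddSubgroup.mem_addSubgroupOf.1 hx)))

/-- The shifted (décalée) filtration `Dec(F)`:
`Dec(F)^p L^l = { x ∈ F^{p+l} L^l : d x ∈ F^{p+l+1} L^{l+1} }`. -/
def decF (L : Cochain) (F : ℤ → ∀ l, AddSubgroup (L.X l)) (p l : ℤ) :
    AddSubgroup (L.X l) :=
  F (p + l) l ⊓ (F (p + l + 1) (l + 1)).comap (L.d l)

theorem decF_isSubcomplex (L : Cochain) (F : ℤ → ∀ l, AddSubgroup (L.X l)) (p : ℤ) :
    L.IsSubcomplex (fun l => decF L F p l) := by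
  intro l x hx
  simp only [decF, AddSubgroup.mem_inf, AddSubgroup.mem_comap] at hx ⊢
  refine ⟨?_, ?_⟩
  · have h : p + (l + 1) = p + l + 1 := by ring
    rw [h]
    exact hx.2
  · rw [L.dd]
    exact zero_mem _

theorem decF_mono (L : Cochain) (F : ℤ → ∀ l, AddSubgroup (L.X l))
    (hdec : ∀ p l, F (p + 1) l ≤ F p l) (p l : ℤ) :
    decF L F (p + 1) l ≤ decF L F p l := by
  intro x hx
  simp only [decF, AddSubgroup.mem_inf, AddSubgroup.mem_comap] at hx ⊢
  have e1 : p + 1 + l = p + l + 1 := by ring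
  rw [e1] at hx
  exact ⟨hdec (p + l) l hx.1, hdec (p + l + 1) (l + 1) hx.2⟩

/-- The iterated graded piece `Gr^a_F Gr^b_G L`, as a cochain complex:
`(F^a ∩ G^b) / (F^{a+1} ∩ G^b + F^a ∩ G^{b+1})`. -/
def GrGrCochain (L : Cochain) (F G : ℤ → ∀ l, AddSubgroup (L.X l))
    (hFsub : ∀ p, L.IsSubcomplex (F p)) (hGsub : ∀ p, L.IsSubcomplex (G p))
    (hFdec : ∀ p l, F (p + 1) l ≤ F p l) (hGdec : ∀ p l, G (p + 1) l ≤ G p l)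
    (a b : ℤ) : Cochain :=
  GrCochain L (fun l => F a l ⊓ G b l)
    (fun l => (F (a + 1) l ⊓ G b l) ⊔ (F a l ⊓ G (b + 1) l))
    (IsSubcomplex.inf (hFsub a) (hGsub b))
    (IsSubcomplex.sup (IsSubcomplex.inf (hFsub (a + 1)) (hGsub b))
      (IsSubcomplex.inf (hFsub a) (hGsub (b + 1))))
    (fun l => sup_le (inf_le_inf_right _ (hFdec a l)) (inf_le_inf_left _ (hGdec b l)))

end Cochain

/-! The complex `Gr^a_F Gr^b_{Dec(F)} L` vanishes outside degrees `a - b - 1` and `a - b`: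
in degree `r > a - b` the condition `x ∈ Dec(F)^b` already forces `x ∈ F^{a+1}`, and in degree
`r < a - b - 1` the condition `x ∈ F^a` already forces `x ∈ Dec(F)^{b+1}`. In degree `a - b - 1`
the differential is injective, since `dx ∈ F^{a+1}` is exactly what puts `x ∈ F^a` into
`Dec(F)^{b+1}`. -/

namespace Cochain

theorem GrCochain.subsingleton_H_of_cocycle_mem {L : Cochain} {S T : ∀ l, AddSubgroup (L.X l)}
    (hS : L.IsSubcomplex S) (hT : L.IsSubcomplex T) (hle : ∀ l, T l ≤ S l) (l : ℤ)
    (h : ∀ x ∈ S l, L.d l x ∈ T (l + 1) → x ∈ T l) :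
    Subsingleton ((GrCochain L S T hS hT hle).H l) := by
  have : Subsingleton ↥((GrCochain L S T hS hT hle).cocycles l) := by
    refine subsingleton_of_forall_eq 0 ?_
    rintro ⟨z, hz⟩
    induction z using QuotientAddGroup.induction_on with
    | H y =>
      have hdy : L.d l y.1 ∈ T (l + 1) :=
        AddSubgroup.mem_addSubgroupOf.1
          ((QuotientAddGroup.eq_zero_iff (N := (T (l + 1)).addSubgroupOf (S (l + 1))) _).1 hz)
      exact Subtype.ext <| (QuotientAddGroup.eq_zero_iff (N := (T l).addSubgroupOf (S l)) _).2
        (AddSubgroup.mem_addSubgroupOf.2 (h y.1 y.2 hdy))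
  exact QuotientAddGroup.mk_surjective.subsingleton

section Dec

variable {L : Cochain} {F : ℤ → ∀ l, AddSubgroup (L.X l)}

theorem mem_decF_iff {p l : ℤ} {x : L.X l} :
    x ∈ decF L F p l ↔ x ∈ F (p + l) l ∧ L.d l x ∈ F (p + l + 1) (l + 1) :=
  AddSubgroup.mem_inf

theorem decF_le (hdec : ∀ p l, F (p + 1) l ≤ F p l) {p q l : ℤ} (hq : q ≤ p + l) :
    decF L F p l ≤ F q l :=
  fun _ hx => antitone_int_of_succ_le (f := (F · l)) (fun n => hdec n l) hq (mem_decF_iff.1 hx).1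

theorem le_decF (hdec : ∀ p l, F (p + 1) l ≤ F p l) (hsub : ∀ p, L.IsSubcomplex (F p))
    {p q l : ℤ} (hq : p + l + 1 ≤ q) : F q l ≤ decF L F p l := fun x hx =>
  mem_decF_iff.2 ⟨antitone_int_of_succ_le (f := (F · l)) (fun n => hdec n l) (by omega) hx,
    antitone_int_of_succ_le (f := (F · (l + 1))) (fun n => hdec n (l + 1)) hq (hsub q l x hx)⟩

end Dec

end Cochain

open Cochain in
theorem vanishing_gr_F_gr_decF_general (L : Cochain)
    (F : ℤ → ∀ l, AddSubgroup (L.X l))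
    (hdec : ∀ p l, F (p + 1) l ≤ F p l)
    (hsub : ∀ p, L.IsSubcomplex (F p))
    (a b r : ℤ) (hr : r ≠ a - b) :
    Subsingleton ((GrGrCochain L F (fun q l => decF L F q l)
      hsub (fun q => decF_isSubcomplex L F q) hdec
      (fun q l => decF_mono L F hdec q l) a b).H r) := by
  apply GrCochain.subsingleton_H_of_cocycle_mem
  intro x ⟨hxF, hxG⟩ hdx
  rcases lt_trichotomy r (a - b - 1) with hlow | hedge | hhigh
  · exact AddSubgroup.mem_sup_right ⟨hxF, le_decF hdec hsub (by omega) hxF⟩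
  · subst hedge
    have hdxF : L.d _ x ∈ F (a + 1) (a - b - 1 + 1) := by
      obtain ⟨u, hu, v, hv, huv⟩ := AddSubgroup.mem_sup.1 hdx
      rw [← huv]
      exact add_mem hu.1 (decF_le hdec (by omega) hv.2)
    refine AddSubgroup.mem_sup_right ⟨hxF, mem_decF_iff.2 ⟨?_, ?_⟩⟩
    · rwa [show b + 1 + (a - b - 1) = a by ring]
    · rwa [show b + 1 + (a - b - 1) + 1 = a + 1 by ring]
  · exact AddSubgroup.mem_sup_left ⟨decF_le hdec (by omega) hxG, hxG⟩

open Cochain in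
/-- For a filtered cochain complex `(L, F)` of abelian groups with shifted
filtration `Dec(F)`, the bifiltered complex `(L, F, Dec(F))` satisfies the vanishing
`H^r(Gr^a_F Gr^b_{Dec(F)} L) = 0` for all `r ≠ a - b`. -/
theorem vanishing_gr_F_gr_decF (L : Cochain)
    (F : ℤ → ∀ l, AddSubgroup (L.X l))
    (hdec : ∀ p l, F (p + 1) l ≤ F p l)
    (hsub : ∀ p, L.IsSubcomplex (F p))
    (hfin : ∃ a b : ℤ, (∀ l, F a l = ⊤) ∧ (∀ l, F b l = ⊥))
    (a b r : ℤ) (hr : r ≠ a - b) :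
    Subsingleton ((GrGrCochain L F (fun q l => decF L F q l)
      hsub (fun q => decF_isSubcomplex L F q) hdec
      (fun q l => decF_mono L F hdec q l) a b).H r) :=
  vanishing_gr_F_gr_decF_general L F hdec hsub a b r hr
end

section
/- Let L be a bounded-below cochain complex of abelian groups equipped with two finite decreasing filtrations P and F by subcomplexes, satisfying the vanishing condition: H^r(Gr^a_F Gr^b_P L) = 0 for all r ≠ a − b. Then for all integers p and l, the induced filtrations on cohomology agree after shift: P^p H^l(L) = F^{p+l} H^l(L), where for a subcomplex A ⊆ L, the induced subgroup of H^l(L) is Im(H^l(A) → H^l(L)). -/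
set_option linter.unusedVariables false


/-! The vanishing hypothesis says, elementwise, that a relative cocycle of `F^a ∩ P^b` modulo
`F^{a+1} ∩ P^b + F^a ∩ P^{b+1}` in degree `r ≠ a - b` is a relative coboundary. For `l < a - b`
this gives, by descending induction on `a` (which stops because `F` is eventually `0`), that a
relative cocycle of `F^a ∩ P^b` with differential in `F^a ∩ P^{b+1}` lies in `F^a ∩ P^{b+1}` up to
the differential of an element of `F^a ∩ P^b`: the `F^{a+1} ∩ P^b` part of the error term is
handled by the induction hypothesis. Iterating in `b`, starting from `P^{b₀} = L`, moves a cocycle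
of `F^{p+l}` in degree `l` into `P^p` without changing its class; the same argument with `F` and
`P` exchanged (now `l > a - b`) moves a cocycle of `P^p` into `F^{p+l}`. -/

theorem le_sup_of_forall_le_sup_succ {α : Type*} [SemilatticeSup α] {x : ℤ → α} {e : α}
    {b c : ℤ} (hbc : b ≤ c) (h : ∀ n, b ≤ n → n < c → x n ≤ e ⊔ x (n + 1)) :
    x b ≤ e ⊔ x c := by
  induction c, hbc using Int.leInduction with
  | base => exact le_sup_right
  | succ n hbn ih =>
    calc x b ≤ e ⊔ x n := ih fun k hbk hkn => h k hbk (by omega)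
      _ ≤ e ⊔ (e ⊔ x (n + 1)) := sup_le_sup_left (h n hbn (by omega)) e
      _ = e ⊔ x (n + 1) := by rw [← sup_assoc, sup_idem]

namespace Cochain

variable {L M : Cochain}

def dTo (L : Cochain) (l : ℤ) : L.X (l - 1) →+ L.X l :=
  (L.castAdd (show l - 1 + 1 = l by ring)).toAddMonoidHom.comp (L.d (l - 1))

theorem d_dTo (l : ℤ) (y : L.X (l - 1)) : L.d l (L.dTo l y) = 0 := by
  have key : ∀ {a b : ℤ} (h : a + 1 = b) (x : L.X (a + 1)), L.d (a + 1) x = 0 →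
      L.d b (L.castAdd h x) = 0 := by
    intro a b h x hx; subst h; exact hx
  exact key _ _ (L.dd _ y)

theorem Hom.map_dTo (φ : Hom L M) (l : ℤ) (y : L.X (l - 1)) :
    φ.f l (L.dTo l y) = M.dTo l (φ.f (l - 1) y) := by
  simp only [dTo, AddMonoidHom.comp_apply, AddEquiv.coe_toAddMonoidHom, φ.cast_natural, φ.comm]

theorem quotHom_f_eq_zero_iff {S : ∀ l, AddSubgroup (L.X l)} {hS : L.IsSubcomplex S} {l : ℤ}
    {x : L.X l} : (L.quotHom S hS).f l x = 0 ↔ x ∈ S l :=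
  QuotientAddGroup.eq_zero_iff x

theorem mem_range_dTo_sup_of_subsingleton_H_quot {U : ∀ l, AddSubgroup (L.X l)}
    {hU : L.IsSubcomplex U} {r : ℤ} (hH : Subsingleton ((L.quot U hU).H r)) {x : L.X r}
    (hdx : L.d r x ∈ U (r + 1)) : x ∈ (L.dTo r).range ⊔ U r := by
  set q := L.quotHom U hU
  have hcocycle : q.f r x ∈ (L.quot U hU).cocycles r := by
    show _ = 0
    rwa [← q.comm, quotHom_f_eq_zero_iff]
  obtain ⟨η, hη⟩ : q.f r x ∈ (L.quot U hU).bdry r :=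
    AddSubgroup.mem_addSubgroupOf.1 ((QuotientAddGroup.eq_zero_iff _).1
      (Subsingleton.elim ((L.quot U hU).Hmk r ⟨_, hcocycle⟩) 0))
  obtain ⟨s, rfl⟩ := QuotientAddGroup.mk'_surjective (U (r - 1)) η
  have hs : x - L.dTo r s ∈ U r := by
    rw [← quotHom_f_eq_zero_iff, map_sub, sub_eq_zero]
    exact ((q.map_dTo r s).trans hη).symm
  exact AddSubgroup.mem_sup.2 ⟨L.dTo r s, ⟨s, rfl⟩, _, hs, add_sub_cancel _ _⟩

/-- The elementwise form of `H^r(S / T) = 0`. -/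
def RelExact (L : Cochain) (S T : ∀ l, AddSubgroup (L.X l)) (r : ℤ) : Prop :=
  ∀ x ∈ S r, L.d r x ∈ T (r + 1) → x ∈ (S (r - 1)).map (L.dTo r) ⊔ T r

theorem relExact_of_subsingleton_H {S T : ∀ l, AddSubgroup (L.X l)} {hS : L.IsSubcomplex S}
    {hT : L.IsSubcomplex T} {hle : ∀ l, T l ≤ S l} {r : ℤ}
    (hH : Subsingleton ((GrCochain L S T hS hT hle).H r)) : L.RelExact S T r := by
  intro x hxS hdx
  obtain ⟨_, ⟨s, rfl⟩, u, hu, hsum⟩ := AddSubgroup.mem_sup.1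
    (mem_range_dTo_sup_of_subsingleton_H_quot hH (x := ⟨x, hxS⟩)
      (AddSubgroup.mem_addSubgroupOf.2 hdx))
  have hsum' := congrArg ((L.subIncl S hS).f r) hsum
  rw [map_add, (L.subIncl S hS).map_dTo] at hsum'
  exact AddSubgroup.mem_sup.2 ⟨_, ⟨_, s.2, rfl⟩, _, AddSubgroup.mem_addSubgroupOf.1 hu, hsum'⟩

/-- Relative exactness of `Gr^a_A Gr^b_B L` in degree `r`. -/
def BiRelExact (L : Cochain) (A B : ℤ → ∀ l, AddSubgroup (L.X l)) (a b r : ℤ) : Prop :=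
  L.RelExact (fun l => A a l ⊓ B b l) (fun l => A (a + 1) l ⊓ B b l ⊔ A a l ⊓ B (b + 1) l) r

theorem BiRelExact.symm {A B : ℤ → ∀ l, AddSubgroup (L.X l)} {a b r : ℤ}
    (h : L.BiRelExact A B a b r) : L.BiRelExact B A b a r := by
  simpa only [BiRelExact, RelExact, inf_comm, sup_comm] using h

theorem relExact_of_eq_bot {S T : ∀ l, AddSubgroup (L.X l)} {r : ℤ} (hS : S r = ⊥) :
    L.RelExact S T r := by
  intro x hx _
  rw [hS, AddSubgroup.mem_bot] at hx
  rw [hx]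
  exact zero_mem _

theorem BiRelExact.relExact_inf_succ {A B : ℤ → ∀ l, AddSubgroup (L.X l)}
    (hA : ∀ a, L.IsSubcomplex (A a)) (hB : ∀ b, L.IsSubcomplex (B b))
    (hAdec : ∀ a l, A (a + 1) l ≤ A a l) {a b l : ℤ} (h : L.BiRelExact A B a b l)
    (hnext : L.RelExact (fun l => A (a + 1) l ⊓ B b l) (fun l => A (a + 1) l ⊓ B (b + 1) l) l) :
    L.RelExact (fun l => A a l ⊓ B b l) (fun l => A a l ⊓ B (b + 1) l) l := by
  intro z hz hdz
  obtain ⟨_, ⟨y₁, hy₁, rfl⟩, w, hw, rfl⟩ :=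
    AddSubgroup.mem_sup.1 (h z hz (AddSubgroup.mem_sup_right hdz))
  obtain ⟨u, hu, v, hv, rfl⟩ := AddSubgroup.mem_sup.1 hw
  have hdu : L.d l u ∈ A (a + 1) (l + 1) ⊓ B (b + 1) (l + 1) := by
    refine AddSubgroup.mem_inf.2 ⟨hA _ l u hu.1, ?_⟩
    have : L.d l u = L.d l (L.dTo l y₁ + (u + v)) - L.d l v := by
      rw [map_add, map_add, d_dTo]; abel
    exact this ▸ sub_mem (AddSubgroup.mem_inf.1 hdz).2 (hB _ l v hv.2)
  obtain ⟨_, ⟨y₂, hy₂, rfl⟩, t, ht, rfl⟩ := AddSubgroup.mem_sup.1 (hnext u hu hdu)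
  refine AddSubgroup.mem_sup.2 ⟨L.dTo l (y₁ + y₂), ⟨y₁ + y₂, ?_, rfl⟩, t + v, ?_, ?_⟩
  · exact ⟨add_mem hy₁.1 (hAdec a _ hy₂.1), add_mem hy₁.2 hy₂.2⟩
  · exact ⟨add_mem (hAdec a l ht.1) hv.1, add_mem ht.2 hv.2⟩
  · rw [map_add]; abel
theorem relExact_inf_succ_of_biRelExact {A B : ℤ → ∀ l, AddSubgroup (L.X l)}
    (hA : ∀ a, L.IsSubcomplex (A a)) (hB : ∀ b, L.IsSubcomplex (B b))
    (hAdec : ∀ a l, A (a + 1) l ≤ A a l) {a₁ : ℤ} (hAbot : ∀ l, A a₁ l = ⊥) {a b l : ℤ}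
    (hrel : ∀ a', a ≤ a' → L.BiRelExact A B a' b l) :
    L.RelExact (fun l => A a l ⊓ B b l) (fun l => A a l ⊓ B (b + 1) l) l := by
  suffices ∀ n, n ≤ max a a₁ → a ≤ n →
      L.RelExact (fun l => A n l ⊓ B b l) (fun l => A n l ⊓ B (b + 1) l) l from
    this a (le_max_left _ _) le_rfl
  intro n hn
  induction n, hn using Int.leInductionDown with
  | base =>
    refine fun _ => relExact_of_eq_bot (eq_bot_iff.2 (inf_le_left.trans ?_))
    exact hAbot l ▸ antitone_int_of_succ_le (f := (A · l)) (hAdec · l) (le_max_right a a₁)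
  | pred n _ ih =>
    intro han
    refine (hrel (n - 1) han).relExact_inf_succ hA hB hAdec ?_
    simpa only [sub_add_cancel] using ih (by omega)

theorem RelExact.cocycles_inf_le {S T : ∀ l, AddSubgroup (L.X l)} {l : ℤ}
    (h : L.RelExact S T l) : L.cocycles l ⊓ S l ≤ L.bdry l ⊔ L.cocycles l ⊓ T l := by
  rintro z ⟨hzc, hzS⟩
  have hdz : L.d l z = 0 := hzc
  obtain ⟨_, ⟨y, -, rfl⟩, t, ht, rfl⟩ :=
    AddSubgroup.mem_sup.1 (h z hzS (hdz ▸ zero_mem (T (l + 1))))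
  have htc : L.d l t = 0 := by rwa [map_add, d_dTo, zero_add] at hdz
  exact AddSubgroup.mem_sup.2 ⟨L.dTo l y, ⟨y, rfl⟩, t, ⟨htc, ht⟩, rfl⟩

theorem cocycles_inf_le_bdry_sup_of_biRelExact {A B : ℤ → ∀ l, AddSubgroup (L.X l)}
    (hA : ∀ a, L.IsSubcomplex (A a)) (hB : ∀ b, L.IsSubcomplex (B b))
    (hAdec : ∀ a l, A (a + 1) l ≤ A a l) (hBdec : ∀ b l, B (b + 1) l ≤ B b l) {a₁ b₀ : ℤ}
    (hAbot : ∀ l, A a₁ l = ⊥) (hBtop : ∀ l, B b₀ l = ⊤) {a c l : ℤ}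
    (hrel : ∀ a' b', a ≤ a' → b' < c → L.BiRelExact A B a' b' l) :
    L.cocycles l ⊓ A a l ≤ L.bdry l ⊔ L.cocycles l ⊓ B c l := by
  have hBtop' : B (min b₀ c) l = ⊤ := top_unique <| hBtop l ▸
    antitone_int_of_succ_le (f := (B · l)) (hBdec · l) (min_le_left b₀ c)
  calc L.cocycles l ⊓ A a l = L.cocycles l ⊓ (A a l ⊓ B (min b₀ c) l) := by
        rw [hBtop', inf_top_eq]
    _ ≤ L.bdry l ⊔ L.cocycles l ⊓ (A a l ⊓ B c l) :=
      le_sup_of_forall_le_sup_succ (x := fun n => L.cocycles l ⊓ (A a l ⊓ B n l))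
        (min_le_right b₀ c) fun n _ hnc =>
          (relExact_inf_succ_of_biRelExact hA hB hAdec hAbot
            fun a' ha' => hrel a' n ha' hnc).cocycles_inf_le
    _ ≤ L.bdry l ⊔ L.cocycles l ⊓ B c l := sup_le_sup_left (inf_le_inf_left _ inf_le_right) _

theorem imageInH_le_of_cocycles_inf_le {S T : ∀ l, AddSubgroup (L.X l)}
    (hS : L.IsSubcomplex S) (hT : L.IsSubcomplex T) {l : ℤ}
    (h : L.cocycles l ⊓ S l ≤ L.bdry l ⊔ L.cocycles l ⊓ T l) :
    imageInH L S hS l ≤ imageInH L T hT l := by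
  rintro _ ⟨ξ, rfl⟩
  obtain ⟨⟨z, hz⟩, rfl⟩ := QuotientAddGroup.mk'_surjective _ ξ
  have hzc : z.1 ∈ L.cocycles l := congrArg Subtype.val hz
  obtain ⟨β, hβ, z', ⟨hz'c, hz'T⟩, hsum⟩ := AddSubgroup.mem_sup.1 (h ⟨hzc, z.2⟩)
  refine ⟨(L.sub T hT).Hmk l ⟨⟨z', hz'T⟩, Subtype.ext hz'c⟩, ?_⟩
  show L.Hmk l ⟨z', hz'c⟩ = L.Hmk l ⟨z.1, hzc⟩
  refine QuotientAddGroup.eq.2 (AddSubgroup.mem_addSubgroupOf.2 ?_)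
  convert hβ using 1
  simp only [AddSubgroup.coe_add, AddSubgroup.coe_neg, ← hsum]
  abel

end Cochain

open Cochain in
theorem bifiltered_key_proposition_general (L : Cochain)
    (P F : ℤ → ∀ l, AddSubgroup (L.X l))
    (hPdec : ∀ p l, P (p + 1) l ≤ P p l) (hFdec : ∀ p l, F (p + 1) l ≤ F p l)
    (hPsub : ∀ p, L.IsSubcomplex (P p)) (hFsub : ∀ p, L.IsSubcomplex (F p))
    (hPfin : ∃ a b : ℤ, (∀ l, P a l = ⊤) ∧ (∀ l, P b l = ⊥))
    (hFfin : ∃ a b : ℤ, (∀ l, F a l = ⊤) ∧ (∀ l, F b l = ⊥))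
    (hvan : ∀ a b r : ℤ, r ≠ a - b →
      Subsingleton ((GrGrCochain L F P hFsub hPsub hFdec hPdec a b).H r)) :
    ∀ p l : ℤ, imageInH L (P p) (hPsub p) l = imageInH L (F (p + l)) (hFsub (p + l)) l := by
  obtain ⟨b₀, b₁, hPtop, hPbot⟩ := hPfin
  obtain ⟨a₀, a₁, hFtop, hFbot⟩ := hFfin
  have hrel : ∀ a b r, r ≠ a - b → L.BiRelExact F P a b r :=
    fun a b r h => relExact_of_subsingleton_H (hvan a b r h)
  intro p l
  apply le_antisymm
  · exact imageInH_le_of_cocycles_inf_le _ _ <|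
      cocycles_inf_le_bdry_sup_of_biRelExact hPsub hFsub hPdec hFdec hPbot hFtop
        fun b a hb ha => (hrel a b l (by omega)).symm
  · exact imageInH_le_of_cocycles_inf_le _ _ <|
      cocycles_inf_le_bdry_sup_of_biRelExact hFsub hPsub hFdec hPdec hFbot hPtop
        fun a b ha hb => hrel a b l (by omega)

open Cochain in
/-- (Key proposition on bifiltered complexes, cohomological form.)
If a bounded-below cochain complex `L` of abelian groups carries two finite decreasing
filtrations `P` and `F` by subcomplexes with `H^r(Gr^a_F Gr^b_P L) = 0` for all `r ≠ a - b`,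
then the induced filtrations on cohomology agree after the shift:
`P^p H^l(L) = F^{p+l} H^l(L)`. -/
theorem bifiltered_key_proposition (L : Cochain)
    (P F : ℤ → ∀ l, AddSubgroup (L.X l))
    (hbelow : ∃ n₀ : ℤ, ∀ l : ℤ, l < n₀ → ∀ x : L.X l, x = 0)
    (hPdec : ∀ p l, P (p + 1) l ≤ P p l) (hFdec : ∀ p l, F (p + 1) l ≤ F p l)
    (hPsub : ∀ p, L.IsSubcomplex (P p)) (hFsub : ∀ p, L.IsSubcomplex (F p))
    (hPfin : ∃ a b : ℤ, (∀ l, P a l = ⊤) ∧ (∀ l, P b l = ⊥))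
    (hFfin : ∃ a b : ℤ, (∀ l, F a l = ⊤) ∧ (∀ l, F b l = ⊥))
    (hvan : ∀ a b r : ℤ, r ≠ a - b →
      Subsingleton ((GrGrCochain L F P hFsub hPsub hFdec hPdec a b).H r)) :
    ∀ p l : ℤ, imageInH L (P p) (hPsub p) l = imageInH L (F (p + l)) (hFsub (p + l)) l :=
  bifiltered_key_proposition_general L P F hPdec hFdec hPsub hFsub hPfin hFfin hvan
end

section
/- Let (L, F) be a filtered cochain complex of abelian groups with finite decreasing filtration by subcomplexes. For each p, there is a natural map of cochain complexes from Gr^p_{Dec(F)} L to the complex whose degree-l term is E_1^{p+l, −p}(L, F) = H^{p+l}(Gr^{p+l}_F L) with differential the d_1-differential of the spectral sequence of (L, F), and this natural map is a quasi-isomorphism. -/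
set_option linter.unusedVariables false


open Cochain in
/-- The canonical map sending an element `x ∈ F^s L^l` with `dx ∈ F^{s+1} L^{l+1}` to the
cohomology class of its image in `H^l(Gr^s_F L)`. -/
def grClassHom (L : Cochain) (F : ℤ → ∀ l, AddSubgroup (L.X l))
    (hsub : ∀ p, L.IsSubcomplex (F p)) (hdec : ∀ p l, F (p + 1) l ≤ F p l) (s l : ℤ) :
    ↥(F s l ⊓ (F (s + 1) (l + 1)).comap (L.d l)) →+
      (GrCochain L (F s) (F (s + 1)) (hsub s) (hsub (s + 1)) (fun l' => hdec s l')).H l :=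
  (Cochain.Hmk _ l).comp (AddMonoidHom.codRestrict
    ((QuotientAddGroup.mk' ((F (s + 1) l).addSubgroupOf (F s l))).comp
      (AddSubgroup.inclusion inf_le_left)) _ (fun x => by
        refine AddMonoidHom.mem_ker.2 ?_
        exact (QuotientAddGroup.eq_zero_iff (N := (F (s + 1) (l + 1)).addSubgroupOf
          (F s (l + 1))) _).2 (AddSubgroup.mem_addSubgroupOf.2
          (AddSubgroup.mem_comap.1 (AddSubgroup.mem_inf.1 x.2).2))))

/-! An element `x` of `Dec(F)^p L^l`, i.e. `x ∈ F^{p+l}` with `dx ∈ F^{p+l+1}`, represents a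
class in `H^l(Gr^{p+l}_F L) = E_1^{p+l,-p}`; every class has such a representative, and the class
vanishes when `x ∈ Dec(F)^{p+1} ⊆ F^{p+l+1}`. This is the comparison map, and `d_1 [x] = [dx]`
makes it a map of complexes. On cohomology both defects are absorbed by correcting
representatives. If a `Gr_{Dec}`-cocycle `x` (so `dx ∈ F^{p+l+2}`) maps to a `d_1`-boundary
`[dw]`, then `x - dw - du ∈ F^{p+l+1}` for some `u ∈ F^{p+l}`, so `w + u ∈ Dec(F)^p` and
`x ≡ d(w + u)` modulo `Dec(F)^{p+1}`. If `[x]` is a `d_1`-cocycle, then `dx - du ∈ F^{p+l+2}`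
for some `u ∈ F^{p+l+1}`, and `x - u` is a `Gr_{Dec}`-cocycle with the same image as `x`. -/

namespace Cochain

variable {L : Cochain}

theorem Hmk_eq_zero_iff {l : ℤ} (z : L.cocycles l) : L.Hmk l z = 0 ↔ z.1 ∈ L.bdry l :=
  (QuotientAddGroup.eq_zero_iff z).trans AddSubgroup.mem_addSubgroupOf

theorem castAdd_d {a b : ℤ} (e : a = b) (y : L.X a) :
    L.castAdd (congrArg (· + 1) e) (L.d a y) = L.d b (L.castAdd e y) := by
  subst e; rfl

theorem castAdd_castAdd {a b c : ℤ} (e₁ : a = b) (e₂ : b = c) (x : L.X a) :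
    L.castAdd e₂ (L.castAdd e₁ x) = L.castAdd (e₁.trans e₂) x := by
  subst e₁ e₂; rfl

theorem mem_bdry_succ_iff {m : ℤ} (x : L.X (m + 1)) :
    x ∈ L.bdry (m + 1) ↔ ∃ y : L.X m, L.d m y = x := by
  constructor
  · rintro ⟨y, rfl⟩
    exact ⟨L.castAdd (by ring) y, (castAdd_d (by ring) y).symm⟩
  · rintro ⟨y, rfl⟩
    refine ⟨L.castAdd (show m = m + 1 - 1 by ring) y, ?_⟩
    simp only [AddMonoidHom.comp_apply, AddEquiv.coe_toAddMonoidHom]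
    rw [← castAdd_d, castAdd_castAdd]
    rfl

section GrCochain

variable {S T : ∀ l, AddSubgroup (L.X l)} {hS : L.IsSubcomplex S} {hT : L.IsSubcomplex T}
  {hle : ∀ l, T l ≤ S l}

theorem GrCochain.mk_eq_mk_iff {l : ℤ} (x y : S l) :
    (QuotientAddGroup.mk x : (GrCochain L S T hS hT hle).X l) = QuotientAddGroup.mk y ↔
      x.1 - y.1 ∈ T l :=
  (QuotientAddGroup.eq_iff_sub_mem (N := (T l).addSubgroupOf (S l))).trans
    AddSubgroup.mem_addSubgroupOf

theorem GrCochain.mk_eq_zero_iff {l : ℤ} (x : S l) :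
    (QuotientAddGroup.mk x : (GrCochain L S T hS hT hle).X l) =
      (0 : (GrCochain L S T hS hT hle).X l) ↔ x.1 ∈ T l :=
  (QuotientAddGroup.eq_zero_iff x).trans AddSubgroup.mem_addSubgroupOf

theorem GrCochain.mk_mem_cocycles_iff {l : ℤ} (x : S l) :
    (QuotientAddGroup.mk x : (GrCochain L S T hS hT hle).X l) ∈
      (GrCochain L S T hS hT hle).cocycles l ↔ L.d l x ∈ T (l + 1) :=
  GrCochain.mk_eq_zero_iff (x := ⟨L.d l x, hS l x x.2⟩)

theorem GrCochain.mk_mem_bdry_succ_iff {m : ℤ} (x : S (m + 1)) :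
    (QuotientAddGroup.mk x : (GrCochain L S T hS hT hle).X (m + 1)) ∈
      (GrCochain L S T hS hT hle).bdry (m + 1) ↔ ∃ y ∈ S m, x.1 - L.d m y ∈ T (m + 1) := by
  refine (mem_bdry_succ_iff _).trans ⟨?_, ?_⟩
  · rintro ⟨y, hy⟩
    obtain ⟨y, rfl⟩ : ∃ y' : S m, QuotientAddGroup.mk y' = y :=
      QuotientAddGroup.mk_surjective y
    exact ⟨y, y.2, (GrCochain.mk_eq_mk_iff _ _).1 hy.symm⟩
  · rintro ⟨y, hy, hxy⟩
    exact ⟨QuotientAddGroup.mk ⟨y, hy⟩, ((GrCochain.mk_eq_mk_iff _ _).2 hxy).symm⟩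

end GrCochain

section Filtered

variable {F : ℤ → ∀ l, AddSubgroup (L.X l)} {hsub : ∀ p, L.IsSubcomplex (F p)}
  {hdec : ∀ p l, F (p + 1) l ≤ F p l}

abbrev Z₁ (F : ℤ → ∀ l, AddSubgroup (L.X l)) (s l : ℤ) : AddSubgroup (L.X l) :=
  F s l ⊓ (F (s + 1) (l + 1)).comap (L.d l)

theorem mem_of_mem_of_le (hdec : ∀ p l, F (p + 1) l ≤ F p l) {s t l : ℤ} (hst : s ≤ t)
    {x : L.X l} (hx : x ∈ F t l) : x ∈ F s l :=
  antitone_int_of_succ_le (f := fun s => F s l) (fun s => hdec s l) hst hx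

variable (hsub hdec) in
theorem grClassHom_surjective (s l : ℤ) :
    Function.Surjective (grClassHom L F hsub hdec s l) := by
  intro c
  obtain ⟨⟨z, hz⟩, rfl⟩ := QuotientAddGroup.mk'_surjective _ c
  obtain ⟨x, rfl⟩ : ∃ x : F s l, QuotientAddGroup.mk x = z := QuotientAddGroup.mk_surjective z
  exact ⟨⟨x, x.2, (GrCochain.mk_mem_cocycles_iff x).1 hz⟩, rfl⟩

theorem grClassHom_eq_zero_of_mem {s l : ℤ} (x : Z₁ F s l) (hx : x.1 ∈ F (s + 1) l) :
    grClassHom L F hsub hdec s l x = 0 := by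
  refine (Hmk_eq_zero_iff _).2 ?_
  convert AddSubgroup.zero_mem _
  exact (GrCochain.mk_eq_zero_iff (⟨x.1, x.2.1⟩ : F s l)).2 hx

theorem grClassHom_eq_zero_iff {s m : ℤ} (x : Z₁ F s (m + 1)) :
    grClassHom L F hsub hdec s (m + 1) x = 0 ↔
      ∃ u ∈ F s m, x.1 - L.d m u ∈ F (s + 1) (m + 1) :=
  (Hmk_eq_zero_iff _).trans (GrCochain.mk_mem_bdry_succ_iff _)

theorem d_mem_Z₁ {s t l : ℤ} (hst : s + 1 = t) {x : L.X l} (hx : x ∈ Z₁ F s l) :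
    L.d l x ∈ Z₁ F t (l + 1) := by
  subst hst
  refine ⟨hx.2, ?_⟩
  show L.d (l + 1) (L.d l x) ∈ F (s + 1 + 1) (l + 1 + 1)
  rw [L.dd]
  exact zero_mem _

theorem grClassHom_d_eq_zero {s t l : ℤ} (hst : s + 1 = t) (x : Z₁ F s l)
    (hx : grClassHom L F hsub hdec s l x = 0) :
    grClassHom L F hsub hdec t (l + 1) ⟨L.d l x, d_mem_Z₁ hst x.2⟩ = 0 := by
  subst hst
  obtain ⟨m, rfl⟩ : ∃ m, l = m + 1 := ⟨l - 1, by ring⟩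
  obtain ⟨u, -, hxu⟩ := (grClassHom_eq_zero_iff x).1 hx
  refine (grClassHom_eq_zero_iff _).2 ⟨x.1 - L.d m u, hxu, ?_⟩
  simp only [map_sub, L.dd, sub_zero, sub_self, zero_mem]

variable (hsub hdec) in
noncomputable def d₁ {s t : ℤ} (hst : s + 1 = t) (l : ℤ) :
    (GrCochain L (F s) (F (s + 1)) (hsub s) (hsub (s + 1)) (hdec s)).H l →+
      (GrCochain L (F t) (F (t + 1)) (hsub t) (hsub (t + 1)) (hdec t)).H (l + 1) :=
  (grClassHom L F hsub hdec s l).liftOfSurjective (grClassHom_surjective hsub hdec s l)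
    ⟨(grClassHom L F hsub hdec t (l + 1)).comp
      (AddMonoidHom.codRestrict ((L.d l).domRestrict _) _ fun x => d_mem_Z₁ hst x.2),
      fun x hx => grClassHom_d_eq_zero hst x hx⟩

theorem d₁_grClassHom {s t l : ℤ} (hst : s + 1 = t) (x : Z₁ F s l) :
    d₁ hsub hdec hst l (grClassHom L F hsub hdec s l x) =
      grClassHom L F hsub hdec t (l + 1) ⟨L.d l x, d_mem_Z₁ hst x.2⟩ :=
  AddMonoidHom.liftOfRightInverse_comp_apply _ _ _ _ x

variable (hsub hdec) in
noncomputable def E₁Row (p : ℤ) : Cochain where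
  X l := (GrCochain L (F (p + l)) (F (p + l + 1)) (hsub (p + l)) (hsub (p + l + 1))
    (hdec (p + l))).H l
  inst _ := inferInstance
  d l := d₁ hsub hdec (by ring) l
  dd l c := by
    obtain ⟨x, rfl⟩ := grClassHom_surjective hsub hdec (p + l) l c
    rw [d₁_grClassHom, d₁_grClassHom]
    refine grClassHom_eq_zero_of_mem _ ?_
    show L.d (l + 1) (L.d l x) ∈ _
    rw [L.dd]
    exact zero_mem _

variable (hdec) in
abbrev GrDec (p : ℤ) : Cochain :=
  GrCochain L (fun l => decF L F p l) (fun l => decF L F (p + 1) l)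
    (decF_isSubcomplex L F p) (decF_isSubcomplex L F (p + 1)) (fun l => decF_mono L F hdec p l)

variable (hsub hdec) in
noncomputable def decalageHom (p : ℤ) : Hom (GrDec hdec p) (E₁Row hsub hdec p) where
  f l := QuotientAddGroup.lift ((decF L F (p + 1) l).addSubgroupOf (decF L F p l))
    (grClassHom L F hsub hdec (p + l) l) fun x hx =>
    grClassHom_eq_zero_of_mem x
      (mem_of_mem_of_le hdec (by omega) (AddSubgroup.mem_addSubgroupOf.1 hx).1)
  comm l := by
    rintro ⟨x⟩
    exact (d₁_grClassHom (by ring) x).symm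

theorem exists_mem_decF_sub_d_mem_of_grClassHom_eq {p m : ℤ}
    (x : Z₁ F (p + (m + 1)) (m + 1)) (w : Z₁ F (p + m) m)
    (h : grClassHom L F hsub hdec (p + (m + 1)) (m + 1) x =
      grClassHom L F hsub hdec (p + (m + 1)) (m + 1) ⟨L.d m w, d_mem_Z₁ (by ring) w.2⟩) :
    ∃ v ∈ decF L F p m, x.1 - L.d m v ∈ F (p + m + 2) (m + 1) := by
  obtain ⟨u, hu, hxu⟩ :=
    (grClassHom_eq_zero_iff (x - ⟨L.d m w, d_mem_Z₁ (by ring) w.2⟩)).1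
      (by rw [map_sub, h, sub_self])
  have hdv : L.d m (w.1 + u) = x.1 - (x.1 - L.d m w - L.d m u) := by
    rw [map_add]; abel
  refine ⟨w.1 + u, ⟨add_mem w.2.1 (mem_of_mem_of_le hdec (by omega) hu), ?_⟩, ?_⟩
  · show L.d m (w.1 + u) ∈ F (p + m + 1) (m + 1)
    rw [hdv]
    exact sub_mem (mem_of_mem_of_le hdec (by omega) x.2.1)
      (mem_of_mem_of_le hdec (by omega) hxu)
  · rw [map_add, ← sub_sub]
    exact mem_of_mem_of_le hdec (by omega) hxu

theorem decalageHom_Hmap_injective (p n : ℤ) :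
    Function.Injective ((decalageHom hsub hdec p).Hmap n) := by
  obtain ⟨m, rfl⟩ : ∃ m, n = m + 1 := ⟨n - 1, by ring⟩
  refine (injective_iff_map_eq_zero _).2 fun ξ hξ => ?_
  obtain ⟨⟨z, hz⟩, rfl⟩ := QuotientAddGroup.mk'_surjective _ ξ
  obtain ⟨x, rfl⟩ : ∃ x : decF L F p (m + 1), QuotientAddGroup.mk x = z :=
    QuotientAddGroup.mk_surjective z
  have hdx : L.d (m + 1) x ∈ decF L F (p + 1) (m + 1 + 1) :=
    (GrCochain.mk_mem_cocycles_iff x).1 hz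
  obtain ⟨y, hy⟩ := (mem_bdry_succ_iff _).1 ((Hmk_eq_zero_iff _).1 hξ)
  obtain ⟨w, rfl⟩ := grClassHom_surjective hsub hdec (p + m) m y
  obtain ⟨v, hv, hxv⟩ := exists_mem_decF_sub_d_mem_of_grClassHom_eq x w
    ((d₁_grClassHom (show p + m + 1 = p + (m + 1) by ring) w).symm.trans hy).symm
  refine (Hmk_eq_zero_iff _).2 ((GrCochain.mk_mem_bdry_succ_iff x).2 ⟨v, hv, ?_, ?_⟩)
  · exact mem_of_mem_of_le hdec (by omega) hxv
  · refine AddSubgroup.mem_comap.2 ?_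
    rw [map_sub, L.dd, sub_zero]
    exact mem_of_mem_of_le hdec (by omega) hdx.1

theorem decalageHom_Hmap_surjective (p n : ℤ) :
    Function.Surjective ((decalageHom hsub hdec p).Hmap n) := by
  intro c
  obtain ⟨⟨z, hz⟩, rfl⟩ := QuotientAddGroup.mk'_surjective _ c
  obtain ⟨x, rfl⟩ := grClassHom_surjective hsub hdec (p + n) n z
  have hdx : grClassHom L F hsub hdec (p + (n + 1)) (n + 1)
      ⟨L.d n x, d_mem_Z₁ (by ring) x.2⟩ = 0 :=
    (d₁_grClassHom (show p + n + 1 = p + (n + 1) by ring) x).symm.trans hz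
  obtain ⟨u, hu, hdxu⟩ := (grClassHom_eq_zero_iff _).1 hdx
  have hx' : x.1 - u ∈ decF L F p n := by
    refine AddSubgroup.mem_inf.2
      ⟨sub_mem x.2.1 (mem_of_mem_of_le hdec (by omega) hu), AddSubgroup.mem_comap.2 ?_⟩
    rw [map_sub]
    exact mem_of_mem_of_le hdec (by omega) hdxu
  have hcoc : L.d n (x.1 - u) ∈ decF L F (p + 1) (n + 1) := by
    refine ⟨?_, AddSubgroup.mem_comap.2 ?_⟩
    · rw [map_sub]
      exact mem_of_mem_of_le hdec (by omega) hdxu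
    · rw [L.dd]
      exact zero_mem _
  refine ⟨Hmk _ n ⟨QuotientAddGroup.mk (⟨x.1 - u, hx'⟩ : decF L F p n),
    (GrCochain.mk_mem_cocycles_iff _).2 hcoc⟩, congrArg (Hmk _ n) (Subtype.ext ?_)⟩
  show grClassHom L F hsub hdec (p + n) n ⟨x.1 - u, hx'⟩ =
    grClassHom L F hsub hdec (p + n) n x
  rw [← sub_eq_zero, ← map_sub]
  refine grClassHom_eq_zero_of_mem _ ?_
  show x.1 - u - x.1 ∈ F (p + n + 1) n
  rw [sub_sub_cancel_left]
  exact neg_mem (mem_of_mem_of_le hdec (by omega) hu)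

end Filtered

end Cochain

open Cochain in
/-- (Deligne's décalage quasi-isomorphism.) For a filtered cochain complex
`(L, F)` of abelian groups there is a natural map of cochain complexes from
`Gr^p_{Dec(F)} L` to the complex `E` whose degree-`l` term is
`E_1^{p+l,-p}(L, F) = H^{l}(Gr^{p+l}_F L)` with differential the `d_1`-differential of the
spectral sequence of `(L, F)` — `d_1` is the connecting map of
`0 → Gr^{s+1}_F L → F^s L/F^{s+2} L → Gr^s_F L → 0`, characterized (via the surjections
`grClassHom`) by `d_1 [x] = [dx]` for `x ∈ F^s` with `dx ∈ F^{s+1}` — and this natural map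
is a quasi-isomorphism. -/
theorem decalage_quasi_isomorphism (L : Cochain)
    (F : ℤ → ∀ l, AddSubgroup (L.X l))
    (hdec : ∀ p l, F (p + 1) l ≤ F p l)
    (hsub : ∀ p, L.IsSubcomplex (F p))
    (p : ℤ) :
    ∃ (E : Cochain)
      (iso : ∀ l : ℤ, E.X l ≃+ (GrCochain L (F (p + l)) (F (p + l + 1))
        (hsub (p + l)) (hsub (p + l + 1)) (fun l' => hdec (p + l) l')).H l)
      (f : Cochain.Hom (GrCochain L (fun l => decF L F p l) (fun l => decF L F (p + 1) l)
        (decF_isSubcomplex L F p) (decF_isSubcomplex L F (p + 1))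
        (fun l => decF_mono L F hdec p l)) E),
      -- the comparison maps from `{x ∈ F^s : dx ∈ F^{s+1}}` onto `H^l(Gr^s)` are surjective,
      (∀ s l : ℤ, Function.Surjective (grClassHom L F hsub hdec s l)) ∧
      -- the differential of `E` is the `d_1`-differential: `d_1 [x] = [dx]`,
      (∀ (l : ℤ) (x : ↥(decF L F p l)),
        iso (l + 1) (E.d l ((iso l).symm (grClassHom L F hsub hdec (p + l) l x)))
          = grClassHom L F hsub hdec (p + (l + 1)) (l + 1)
            ⟨L.d l x.1, by
              have e : p + (l + 1) = p + l + 1 := by ring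
              rw [e]
              exact AddSubgroup.mem_inf.2
                ⟨AddSubgroup.mem_comap.1 (AddSubgroup.mem_inf.1 x.2).2,
                 AddSubgroup.mem_comap.2 (by rw [L.dd]; exact zero_mem _)⟩⟩) ∧
      -- the natural map `Gr^p_{Dec(F)} L → E` is induced by the identity on representatives,
      (∀ (l : ℤ) (x : ↥(decF L F p l)),
        iso l (f.f l (QuotientAddGroup.mk'
          ((decF L F (p + 1) l).addSubgroupOf (decF L F p l)) x))
          = grClassHom L F hsub hdec (p + l) l x) ∧
      -- and it is a quasi-isomorphism.
      (∀ n : ℤ, Function.Bijective (f.Hmap n)) :=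
  ⟨E₁Row hsub hdec p, fun _ => AddEquiv.refl _, decalageHom hsub hdec p,
    grClassHom_surjective hsub hdec, fun _ x => d₁_grClassHom (by ring) x, fun _ _ => rfl,
    fun n => ⟨decalageHom_Hmap_injective p n, decalageHom_Hmap_surjective p n⟩⟩
end
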